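/- arXiv:2501.18744 — 2 statements merged into one kernel-verified Lean document; each statement's English description precedes it below -/
import Mathlib

section
/- Let $F_n$ be the Fibonacci numbers ($F_1 = F_2 = 1$, $F_n = F_{n-1}+F_{n-2}$) and $L_n$ the Lucas numbers ($L_1 = 1$, $L_2 = 3$, $L_n = L_{n-1}+L_{n-2}$). Then $\sum_{n\ge 0} F_{n+1} q^n = \prod_{n\ge 1}(1-q^n)^{-a_n}$, where $a_n = \frac{1}{n}\sum_{d\mid n} \mu(n/d) L_d$. -/
/-!
Apply the Euler operator `θ = X d/dX`. The factor `B n = (1 - X ^ n) ^ (-a n)` satisfies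
`(1 - X ^ n) θ (B n) = n a n X ^ n B n`, so `θ (B n) / B n = n a n X ^ n / (1 - X ^ n)`, and by
Möbius inversion the logarithmic `θ`-derivative of `∏_{n ≤ N} B n` is `∑_{m ≥ 1} L m X ^ m` up to
degree `N`. Comparing coefficients of `X ^ N` gives `N c N = ∑_{i=1}^{N} L i c (N - i)`, a
recursion that determines `c` from `c 0 = 1` and is also satisfied by `c N = F (N + 1)`.
The factors with `n > N` do not change the coefficient of `X ^ N`.
-/

open Finset PowerSeries ArithmeticFunction

/-- The rising factorial `(a)_k = a(a+1)⋯(a+k-1)`. -/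
noncomputable def risingFact (a : ℝ) (k : ℕ) : ℝ := ∏ j ∈ Finset.range k, (a + j)

/-- The binomial-series expansion of `(1-q^n)^{-a n}`. -/
noncomputable def binomFactor (a : ℕ → ℝ) (n : ℕ) : PowerSeries ℝ :=
  PowerSeries.mk fun k =>
    if n ∣ k then risingFact (a n) (k / n) / (Nat.factorial (k / n)) else 0

open scoped Nat

theorem dvd_prod_sub_one {ι R : Type*} [CommRing R] {s : Finset ι} {f : ι → R} {x : R}
    (h : ∀ i ∈ s, x ∣ f i - 1) : x ∣ ∏ i ∈ s, f i - 1 :=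
  prod_induction f (fun y => x ∣ y - 1)
    (fun u v hu hv => by
      rw [show u * v - 1 = u * (v - 1) + (u - 1) by ring]
      exact dvd_add (dvd_mul_of_dvd_right hv u) hu)
    (by simp) h

theorem Derivation.apply_prod_of_forall_apply_eq_mul {R A ι : Type*} [CommSemiring R]
    [CommSemiring A] [Algebra R A] (D : Derivation R A A) {s : Finset ι} {f g : ι → A}
    (h : ∀ i ∈ s, D (f i) = g i * f i) : D (∏ i ∈ s, f i) = (∑ i ∈ s, g i) * ∏ i ∈ s, f i := by
  classical
  induction s using Finset.induction_on with
  | empty => simp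
  | insert i s hi ih =>
    rw [prod_insert hi, sum_insert hi, D.leibniz, smul_eq_mul, smul_eq_mul,
      ih fun j hj => h j (mem_insert_of_mem hj), h i (mem_insert_self i s)]
    ring

namespace PowerSeries

variable (R : Type*) [CommRing R]

noncomputable def euler : Derivation R R⟦X⟧ R⟦X⟧ := (X : R⟦X⟧) • d⁄dX R

/-- `X ^ n / (1 - X ^ n) = ∑_{j ≥ 1} X ^ (n j)`. -/
def lambertSeries (n : ℕ) : R⟦X⟧ := mk fun k => if 0 < k ∧ n ∣ k then 1 else 0

variable {R}

theorem coeff_euler (f : R⟦X⟧) (n : ℕ) : coeff n (euler R f) = n * coeff n f := by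
  rcases n with _ | n
  · simp [euler]
  · simp [euler, coeff_succ_X_mul, coeff_derivative, mul_comm]

theorem one_sub_X_pow_mul_lambertSeries {n : ℕ} (hn : 0 < n) :
    (1 - X ^ n) * lambertSeries R n = X ^ n := by
  ext k
  rw [sub_mul, one_mul, map_sub, coeff_X_pow_mul', coeff_X_pow, lambertSeries, coeff_mk, coeff_mk]
  obtain hk | rfl | ⟨r, rfl⟩ : k < n ∨ k = n ∨ ∃ r, k = n + r + 1 :=
    (lt_trichotomy k n).imp_right (Or.imp_right fun h => ⟨k - n - 1, by omega⟩)
  · have : ¬ (0 < k ∧ n ∣ k) := fun h => (Nat.le_of_dvd h.1 h.2).not_gt hk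
    simp [this, hk.not_ge, hk.ne]
  · simp [hn]
  · simp [Nat.dvd_add_self_left, add_assoc, show n + (r + 1) - n = r + 1 by omega]

theorem coeff_sum_C_mul_lambertSeries (f : ℕ → R) {m N : ℕ} (hm : m ≤ N) :
    coeff m (∑ n ∈ Icc 1 N, C (f n) * lambertSeries R n) = ∑ d ∈ m.divisors, f d := by
  simp only [map_sum, coeff_C_mul, lambertSeries, coeff_mk, mul_ite, mul_one, mul_zero]
  rw [← sum_filter]
  congr 1
  ext d
  simp only [mem_filter, mem_Icc, Nat.mem_divisors, ← Nat.pos_iff_ne_zero]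
  constructor
  · rintro ⟨-, hm0, hd⟩
    exact ⟨hd, hm0⟩
  · rintro ⟨hd, hm0⟩
    exact ⟨⟨Nat.pos_of_dvd_of_pos hd hm0, (Nat.le_of_dvd hm0 hd).trans hm⟩, hm0, hd⟩

theorem coeff_mul_eq_of_X_pow_dvd_sub_one {n j : ℕ} (hj : j < n) (f : R⟦X⟧) {g : R⟦X⟧}
    (hg : X ^ n ∣ g - 1) : coeff j (f * g) = coeff j f := by
  have h : X ^ n ∣ f * (g - 1) := dvd_mul_of_dvd_right hg f
  rw [X_pow_dvd_iff] at h
  simpa [mul_sub, sub_eq_zero] using h j hj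

end PowerSeries

theorem sum_divisors_mul_eq_of_eq_moebius {K : Type*} [Field K] [CharZero K] {L a : ℕ → K}
    (ha : ∀ n : ℕ, 1 ≤ n →
      a n = (1 / (n : K)) * ∑ d ∈ n.divisors, (ArithmeticFunction.moebius (n / d) : K) * L d)
    {m : ℕ} (hm : 0 < m) :
    ∑ d ∈ m.divisors, (d : K) * a d = L m := by
  refine (sum_eq_iff_sum_mul_moebius_eq (f := fun d => (d : K) * a d)).mpr (fun n hn => ?_) m hm
  rw [Nat.sum_divisorsAntidiagonal' (f := fun d e => (moebius d : K) * L e), ha n hn]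
  have : (n : K) ≠ 0 := Nat.cast_ne_zero.2 hn.ne'
  field_simp

theorem eq_fib_add_fib_of_lucas {R : Type*} [AddMonoidWithOne R] {L : ℕ → R} (hL1 : L 1 = 1)
    (hL2 : L 2 = 3) (hLrec : ∀ n : ℕ, 3 ≤ n → L n = L (n - 1) + L (n - 2)) :
    ∀ n, L (n + 1) = (Nat.fib n + Nat.fib (n + 2) : ℕ)
  | 0 => by simp [hL1]
  | 1 => by rw [hL2]; norm_num [Nat.fib_add_two]
  | n + 2 => by
    rw [hLrec (n + 3) (by omega), show n + 3 - 1 = n + 2 from rfl, show n + 3 - 2 = n + 1 from rfl,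
      eq_fib_add_fib_of_lucas hL1 hL2 hLrec (n + 1), eq_fib_add_fib_of_lucas hL1 hL2 hLrec n,
      ← Nat.cast_add]
    congr 1
    show Nat.fib (n + 1) + Nat.fib (n + 3) + (Nat.fib n + Nat.fib (n + 2)) =
      Nat.fib (n + 2) + Nat.fib (n + 4)
    have h2 : Nat.fib (n + 2) = Nat.fib n + Nat.fib (n + 1) := Nat.fib_add_two
    have h4 : Nat.fib (n + 4) = Nat.fib (n + 2) + Nat.fib (n + 3) := Nat.fib_add_two
    omega

theorem sum_range_fib_add_fib_mul_fib :
    ∀ N, ∑ i ∈ range N, (Nat.fib i + Nat.fib (i + 2)) * Nat.fib (N - i) = N * Nat.fib (N + 1)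
  | 0 => rfl
  | 1 => rfl
  | N + 2 => by
    have hN := sum_range_fib_add_fib_mul_fib N
    have hN1 := sum_range_fib_add_fib_mul_fib (N + 1)
    -- writing `S N` for the left side, `S (N + 2) = S (N + 1) + S N + L (N + 2)`
    have hsplit : ∀ i ∈ range N, (Nat.fib i + Nat.fib (i + 2)) * Nat.fib (N + 2 - i) =
        (Nat.fib i + Nat.fib (i + 2)) * Nat.fib (N + 1 - i) +
          (Nat.fib i + Nat.fib (i + 2)) * Nat.fib (N - i) := fun i hi => by
      have hi : i < N := mem_range.1 hi
      rw [show N + 2 - i = N - i + 2 by omega, Nat.fib_add_two (n := N - i),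
        show N + 1 - i = N - i + 1 by omega]
      ring
    rw [sum_range_succ, sum_range_succ, sum_congr rfl hsplit, sum_add_distrib, hN]
    rw [sum_range_succ] at hN1
    simp only [show N + 1 - N = 1 by omega, show N + 2 - N = 2 by omega,
      show N + 2 - (N + 1) = 1 by omega, Nat.fib_one, Nat.fib_two] at hN1 ⊢
    have h3 := Nat.fib_add_two (n := N + 1)
    have h4 := Nat.fib_add_two (n := N + 2)
    nlinarith

section binomFactor

variable (a : ℕ → ℝ)

theorem succ_mul_risingFact_succ_div_factorial (t : ℝ) (j : ℕ) :
    (j + 1) * (risingFact t (j + 1) / (j + 1)!) = (t + j) * (risingFact t j / j !) := by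
  rw [risingFact, prod_range_succ, ← risingFact, Nat.factorial_succ]
  push_cast
  field_simp

theorem coeff_mul_binomFactor {n : ℕ} (hn : 0 < n) (j : ℕ) :
    coeff (n * j) (binomFactor a n) = risingFact (a n) j / j ! := by
  simp [binomFactor, Nat.mul_div_cancel_left j hn]

theorem coeff_binomFactor_of_not_dvd {n k : ℕ} (h : ¬ n ∣ k) :
    coeff k (binomFactor a n) = 0 := by
  simp [binomFactor, h]

theorem X_pow_dvd_binomFactor_sub_one (n : ℕ) : X ^ n ∣ binomFactor a n - 1 := by
  refine X_pow_dvd_iff.mpr fun m hm => ?_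
  rcases m.eq_zero_or_pos with rfl | hm0
  · simp [binomFactor, risingFact]
  · rw [map_sub, coeff_binomFactor_of_not_dvd a fun h => (Nat.le_of_dvd hm0 h).not_gt hm,
      coeff_one, if_neg hm0.ne', sub_zero]

theorem one_sub_X_pow_mul_euler_binomFactor {n : ℕ} (hn : 0 < n) :
    (1 - X ^ n) * euler ℝ (binomFactor a n) = C (n * a n) * (X ^ n * binomFactor a n) := by
  ext m
  rw [sub_mul, one_mul, map_sub, coeff_X_pow_mul', coeff_C_mul, coeff_X_pow_mul', coeff_euler,
    coeff_euler]
  obtain hm | ⟨r, rfl⟩ : m < n ∨ ∃ r, m = n + r :=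
    (lt_or_ge m n).imp_right fun h => ⟨m - n, by omega⟩
  · rcases m.eq_zero_or_pos with rfl | hm0
    · simp [hn.not_ge]
    · rw [coeff_binomFactor_of_not_dvd a fun h => (Nat.le_of_dvd hm0 h).not_gt hm]
      simp [hm.not_ge]
  · rw [if_pos (Nat.le_add_right n r), if_pos (Nat.le_add_right n r), Nat.add_sub_cancel_left]
    by_cases hr : n ∣ r
    · obtain ⟨j, rfl⟩ := hr
      rw [show n + n * j = n * (j + 1) by ring, coeff_mul_binomFactor a hn,
        coeff_mul_binomFactor a hn]
      push_cast
      linear_combination (n : ℝ) * succ_mul_risingFact_succ_div_factorial (a n) j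
    · rw [coeff_binomFactor_of_not_dvd a hr,
        coeff_binomFactor_of_not_dvd a fun h => hr ((Nat.dvd_add_right dvd_rfl).mp h)]
      simp

theorem euler_binomFactor {n : ℕ} (hn : 0 < n) :
    euler ℝ (binomFactor a n) = C (n * a n) * lambertSeries ℝ n * binomFactor a n := by
  have hne : (1 - X ^ n : ℝ⟦X⟧) ≠ 0 := fun h => by
    simpa [hn.ne'] using congrArg constantCoeff h
  refine mul_left_cancel₀ hne ?_
  rw [one_sub_X_pow_mul_euler_binomFactor a hn]
  linear_combination (-(C (n * a n) * binomFactor a n)) * one_sub_X_pow_mul_lambertSeries (R := ℝ) hn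

theorem euler_prod_binomFactor (N : ℕ) :
    euler ℝ (∏ n ∈ Icc 1 N, binomFactor a n) =
      (∑ n ∈ Icc 1 N, C (n * a n) * lambertSeries ℝ n) * ∏ n ∈ Icc 1 N, binomFactor a n :=
  (euler ℝ).apply_prod_of_forall_apply_eq_mul fun _ hn => euler_binomFactor a (mem_Icc.1 hn).1

theorem coeff_prod_binomFactor_of_le {j N M : ℕ} (hj : j ≤ N) (hN : N ≤ M) :
    coeff j (∏ n ∈ Icc 1 M, binomFactor a n) = coeff j (∏ n ∈ Icc 1 N, binomFactor a n) := by
  simp only [show ∀ k, Icc 1 k = Ioc 0 k from fun k => Icc_add_one_left_eq_Ioc 0 k]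
  rw [← prod_Ioc_consecutive _ (Nat.zero_le N) hN]
  refine coeff_mul_eq_of_X_pow_dvd_sub_one (Nat.lt_succ_of_le hj) _ (dvd_prod_sub_one fun n hn => ?_)
  exact (pow_dvd_pow X (mem_Ioc.1 hn).1).trans (X_pow_dvd_binomFactor_sub_one a n)

theorem natCast_mul_coeff_prod_binomFactor {L : ℕ → ℝ}
    (ha : ∀ n : ℕ, 1 ≤ n →
      a n = (1 / (n : ℝ)) * ∑ d ∈ n.divisors, (ArithmeticFunction.moebius (n / d) : ℝ) * L d)
    (N : ℕ) :
    N * coeff N (∏ n ∈ Icc 1 N, binomFactor a n) =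
      ∑ i ∈ range N, L (i + 1) * coeff (N - (i + 1)) (∏ n ∈ Icc 1 N, binomFactor a n) := by
  rw [← coeff_euler, euler_prod_binomFactor, coeff_mul, Nat.sum_antidiagonal_eq_sum_range_succ
    (fun i j => coeff i _ * coeff j _), sum_range_succ', coeff_sum_C_mul_lambertSeries _ N.zero_le]
  simp only [Nat.divisors_zero, sum_empty, zero_mul, add_zero]
  refine sum_congr rfl fun i hi => ?_
  rw [coeff_sum_C_mul_lambertSeries _ (mem_range.1 hi),
    sum_divisors_mul_eq_of_eq_moebius ha i.succ_pos]

end binomFactor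

theorem stmt12 (L : ℕ → ℝ) (hL1 : L 1 = 1) (hL2 : L 2 = 3)
    (hLrec : ∀ n : ℕ, 3 ≤ n → L n = L (n - 1) + L (n - 2))
    (a : ℕ → ℝ)
    (ha : ∀ n : ℕ, 1 ≤ n →
      a n = (1 / (n : ℝ)) * ∑ d ∈ n.divisors, (ArithmeticFunction.moebius (n / d) : ℝ) * L d) :
    ∀ N : ℕ,
      PowerSeries.coeff N (∏ n ∈ Finset.Icc 1 N, binomFactor a n) =
        (Nat.fib (N + 1) : ℝ) := by
  intro N
  induction N using Nat.strong_induction_on with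
  | _ N ih =>
    rcases N.eq_zero_or_pos with rfl | hN
    · simp
    refine mul_left_cancel₀ (Nat.cast_ne_zero.2 hN.ne') ?_
    rw [natCast_mul_coeff_prod_binomFactor a ha, ← Nat.cast_mul, ← sum_range_fib_add_fib_mul_fib,
      Nat.cast_sum]
    refine sum_congr rfl fun i hi => ?_
    have hi : i < N := mem_range.1 hi
    rw [coeff_prod_binomFactor_of_le a le_rfl (Nat.sub_le N (i + 1)), ih _ (by omega),
      eq_fib_add_fib_of_lucas hL1 hL2 hLrec, show N - (i + 1) + 1 = N - i by omega]
    exact (Nat.cast_mul _ _).symm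
end

section
/- For every positive integer $d$, $d \sum_{\lambda \vdash d} \frac{(-1)^{\ell(\lambda)-1}(\ell(\lambda)-1)! \prod_{i \ge 1} F_{i+1}^{m_i(\lambda)}}{\prod_{i\ge 1} m_i(\lambda)!} = L_d$, where $F_n$ are the Fibonacci numbers and $L_d$ the Lucas numbers. -/
/-!
With `a i = F (i + 1)` the series `A = ∑ a i xⁱ` is `1 / (1 - x - x²)`, and the sum over partitions
of `d` is the coefficient of `x^d` in `log A = -log (1 - x - x²) = ∑ L_d x^d / d`. Formal logarithms
are avoided: for the coefficients `b n` of `B = log A`, the identity `A · x B' = x A'` reads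
`∑_{i+j=n} a i (j b j) = n a n`, and it is proved combinatorially by removing one part from a
partition. The Lucas numbers satisfy the same convolution identity, and a convolution with a
sequence of nonzero constant term can be cancelled in the power series ring.
-/

open Finset

section LogWeight

variable {K : Type*} [Field K]

-- The coefficient of `∏ (a i xⁱ) ^ mᵢ` in `log (1 + ∑_{i ≥ 1} a i xⁱ)`, where `mᵢ = s.count i`.
noncomputable def logWeight (a : ℕ → K) (s : Multiset ℕ) : K :=
  (-1) ^ (s.card - 1) * (s.card - 1).factorial * (s.map a).prod /
    ∏ i ∈ s.toFinset, ((s.count i).factorial : K)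

theorem prod_factorial_count_cons (k : ℕ) (s : Multiset ℕ) :
    ∏ i ∈ (k ::ₘ s).toFinset, ((k ::ₘ s).count i).factorial
      = (s.count k + 1) * ∏ i ∈ s.toFinset, (s.count i).factorial := by
  have hk : k ∈ (k ::ₘ s).toFinset := by simp
  have hsub : s.toFinset ⊆ (k ::ₘ s).toFinset := by
    intro i; simp only [Multiset.mem_toFinset]; exact Multiset.mem_cons_of_mem
  rw [prod_subset (f := fun i => (s.count i).factorial) hsub fun i _ hi => by
      rw [Multiset.count_eq_zero_of_notMem (by simpa using hi), Nat.factorial_zero],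
    ← mul_prod_erase _ _ hk, ← mul_prod_erase _ (fun i => (s.count i).factorial) hk,
    Multiset.count_cons_self, Nat.factorial_succ, mul_assoc]
  congr 2
  exact prod_congr rfl fun i hi => by rw [Multiset.count_cons_of_ne (ne_of_mem_erase hi)]

theorem logWeight_singleton (a : ℕ → K) (k : ℕ) : logWeight a {k} = a k := by
  simp [logWeight]

theorem logWeight_parts_eq_prod_Icc (a : ℕ → K) {n : ℕ} (p : n.Partition) :
    logWeight a p.parts = ((-1) ^ (p.parts.card - 1) * (p.parts.card - 1).factorial *
      ∏ i ∈ Icc 1 n, a i ^ p.parts.count i) / ∏ i ∈ Icc 1 n, ((p.parts.count i).factorial : K) := by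
  have hsub : p.parts.toFinset ⊆ Icc 1 n := fun i hi => by
    rw [Multiset.mem_toFinset] at hi
    exact mem_Icc.2 ⟨p.parts_pos hi, p.le_of_mem_parts hi⟩
  have hcount : ∀ i ∈ Icc 1 n, i ∉ p.parts.toFinset → p.parts.count i = 0 := fun i _ hi =>
    Multiset.count_eq_zero_of_notMem (by simpa using hi)
  rw [logWeight, prod_multiset_map_count,
    prod_subset hsub fun i hi hi' => by rw [hcount i hi hi', pow_zero],
    prod_subset hsub fun i hi hi' => by rw [hcount i hi hi', Nat.factorial_zero, Nat.cast_one]]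

theorem count_mul_logWeight_cons [CharZero K] (a : ℕ → K) (k : ℕ) {s : Multiset ℕ} (hs : s ≠ 0) :
    ((k ::ₘ s).count k : K) * logWeight a (k ::ₘ s) = -s.card * (a k * logWeight a s) := by
  obtain ⟨m, hm⟩ : ∃ m, s.card = m + 1 := Nat.exists_eq_add_one.2 (Multiset.card_pos.2 hs)
  have hD : ∏ i ∈ s.toFinset, ((s.count i).factorial : K) ≠ 0 :=
    prod_ne_zero_iff.2 fun i _ => Nat.cast_ne_zero.2 (Nat.factorial_ne_zero _)
  have hD' := congrArg (Nat.cast (R := K)) (prod_factorial_count_cons k s)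
  push_cast at hD'
  simp only [logWeight, Multiset.card_cons, Multiset.map_cons, Multiset.prod_cons, hD',
    Multiset.count_cons_self, hm, Nat.add_sub_cancel, Nat.factorial_succ]
  field_simp
  push_cast
  ring

theorem sum_toFinset_mul_logWeight_erase [CharZero K] (a : ℕ → K) {s : Multiset ℕ}
    (hs : 2 ≤ s.card) :
    ∑ k ∈ s.toFinset, a k * ((s.erase k).sum * logWeight a (s.erase k))
      = -s.sum * logWeight a s := by
  have hℓ : (s.card : K) - 1 ≠ 0 := by
    have : s.card ≠ 1 := by omega
    rw [sub_ne_zero]; exact_mod_cast this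
  have hterm : ∀ k ∈ s.toFinset, ((s.card : K) - 1) * (a k * ((s.erase k).sum *
      logWeight a (s.erase k))) = -(s.count k * ((s.sum : K) - k)) * logWeight a s := by
    intro k hk
    rw [Multiset.mem_toFinset] at hk
    have hne : s.erase k ≠ 0 := by
      rw [← Multiset.card_pos, Multiset.card_erase_of_mem hk, Nat.pred_eq_sub_one]; omega
    have hW := count_mul_logWeight_cons a k hne
    have hsum := congrArg (Nat.cast (R := K)) (Multiset.sum_cons k (s.erase k))
    have hcard := congrArg (Nat.cast (R := K)) (Multiset.card_cons k (s.erase k))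
    rw [Multiset.cons_erase hk] at hW hsum hcard
    simp only [Nat.cast_add, Nat.cast_one] at hsum hcard
    linear_combination ((s.sum : K) - k) * hW + (a k * (s.erase k).sum *
      logWeight a (s.erase k)) * hcard - ((s.erase k).card * a k * logWeight a (s.erase k)) * hsum
  have hcount : ∑ k ∈ s.toFinset, (s.count k : K) * ((s.sum : K) - k)
      = ((s.card : K) - 1) * s.sum := by
    simp_rw [← nsmul_eq_mul, ← sum_multiset_map_count, Multiset.sum_map_sub,
      Multiset.map_const', Multiset.sum_replicate, nsmul_eq_mul, Nat.cast_multiset_sum]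
    ring
  apply mul_left_cancel₀ hℓ
  rw [mul_sum, sum_congr rfl hterm, ← sum_mul, sum_neg_distrib, hcount]
  ring

end LogWeight

namespace Nat.Partition

theorem two_le_card_parts_of_ne_indiscrete {n : ℕ} {p : n.Partition} (hp : p ≠ indiscrete n) :
    2 ≤ p.parts.card := by
  by_contra! h
  interval_cases hc : p.parts.card
  · obtain rfl : n = 0 := by rw [← p.parts_sum, Multiset.card_eq_zero.1 hc, Multiset.sum_zero]
    exact hp (Subsingleton.elim _ _)
  · obtain ⟨m, hm⟩ := Multiset.card_eq_one.1 hc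
    have hmn : m = n := by rw [← p.parts_sum, hm, Multiset.sum_singleton]
    have hm0 : m ≠ 0 := (p.parts_pos (hm ▸ Multiset.mem_singleton_self m)).ne'
    exact hp (Nat.Partition.ext (by rw [hm, indiscrete_parts (hmn ▸ hm0), hmn]))

theorem sum_antidiagonal_sum_partition {M : Type*} [AddCommMonoid M] (n : ℕ)
    (g : ℕ → Multiset ℕ → M) :
    ∑ ij ∈ antidiagonal n, ∑ q : ij.2.Partition, g (ij.1 + 1) q.parts
      = ∑ p : (n + 1).Partition, ∑ k ∈ p.parts.toFinset, g k (p.parts.erase k) := by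
  calc _ = ∑ ij ∈ antidiagonal n, ∑ p : (n + 1).Partition,
        if ij.1 + 1 ∈ p.parts.toFinset then g (ij.1 + 1) (p.parts.erase (ij.1 + 1)) else 0 := by
        refine sum_congr rfl fun ⟨i, j⟩ hij => ?_
        rw [HasAntidiagonal.mem_antidiagonal] at hij
        dsimp only at hij ⊢
        obtain rfl : j = n + 1 - (i + 1) := by omega
        rw [← sum_filter, sum_subtype (p := fun p : (n + 1).Partition => i + 1 ∈ p.parts) _
          (fun p => by simp)]
        exact (Fintype.sum_equiv (partitionWithPartEquiv (by omega) (by omega)) _ _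
          fun p => by simp).symm
    _ = ∑ p : (n + 1).Partition, ∑ ij ∈ antidiagonal n,
        if ij.1 + 1 ∈ p.parts.toFinset then g (ij.1 + 1) (p.parts.erase (ij.1 + 1)) else 0 :=
        sum_comm
    _ = _ := by
        refine sum_congr rfl fun p _ => ?_
        have hT : p.parts.toFinset ⊆ range (n + 2) := fun k hk =>
          mem_range.2 (Nat.lt_succ_of_le (le_of_mem_parts (Multiset.mem_toFinset.1 hk)))
        have h0 : 0 ∉ p.parts.toFinset := fun h => (p.parts_pos (Multiset.mem_toFinset.1 h)).ne' rfl
        have h := sum_range_succ' (fun k =>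
          if k ∈ p.parts.toFinset then g k (p.parts.erase k) else 0) (n + 1)
        rw [if_neg h0, add_zero, sum_ite_mem, inter_eq_right.2 hT] at h
        rw [Nat.sum_antidiagonal_eq_sum_range_succ_mk, h]

end Nat.Partition

section LogCoeff

variable {K : Type*} [Field K]

open Nat.Partition

noncomputable def logCoeff (a : ℕ → K) (n : ℕ) : K :=
  ∑ p : n.Partition, logWeight a p.parts

-- The coefficient of `xⁿ` in `A · x (log A)' = x A'`, for `A = ∑ a i xⁱ`.
theorem sum_antidiagonal_mul_logCoeff [CharZero K] {a : ℕ → K} (ha0 : a 0 = 1) (n : ℕ) :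
    ∑ ij ∈ antidiagonal n, a ij.1 * (ij.2 * logCoeff a ij.2) = n * a n := by
  rcases n with _ | n
  · simp
  have hn : n + 1 ≠ 0 := n.succ_ne_zero
  have hrest : ∑ ij ∈ antidiagonal n, a (ij.1 + 1) * (ij.2 * logCoeff a ij.2)
      = -((n + 1 : ℕ) * ∑ p ∈ {indiscrete (n + 1)}ᶜ, logWeight a p.parts) := by
    calc _ = ∑ ij ∈ antidiagonal n, ∑ q : ij.2.Partition,
          a (ij.1 + 1) * (q.parts.sum * logWeight a q.parts) := by
          refine sum_congr rfl fun ij _ => ?_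
          simp only [logCoeff, mul_sum]
          exact sum_congr rfl fun q _ => by rw [q.parts_sum]
      _ = ∑ p : (n + 1).Partition, ∑ k ∈ p.parts.toFinset,
          a k * ((p.parts.erase k).sum * logWeight a (p.parts.erase k)) :=
          sum_antidiagonal_sum_partition n fun k m => a k * (m.sum * logWeight a m)
      _ = ∑ p ∈ {indiscrete (n + 1)}ᶜ, -((n + 1 : ℕ) * logWeight a p.parts) := by
          rw [Fintype.sum_eq_add_sum_compl (indiscrete (n + 1)), indiscrete_parts hn]
          simp only [Multiset.toFinset_singleton, sum_singleton, Multiset.erase_singleton,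
            Multiset.sum_zero, Nat.cast_zero, zero_mul, mul_zero, zero_add]
          refine sum_congr rfl fun p hp => ?_
          rw [sum_toFinset_mul_logWeight_erase a (two_le_card_parts_of_ne_indiscrete
            (mem_compl.1 hp ∘ mem_singleton.2)), parts_sum, neg_mul]
      _ = _ := by rw [sum_neg_distrib, mul_sum]
  rw [Nat.sum_antidiagonal_succ, hrest, ha0, logCoeff,
    Fintype.sum_eq_add_sum_compl (indiscrete (n + 1)), indiscrete_parts hn, logWeight_singleton]
  ring

theorem sum_antidiagonal_mul_succ_mul_logCoeff [CharZero K] {a : ℕ → K} (ha0 : a 0 = 1)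
    (n : ℕ) :
    ∑ ij ∈ antidiagonal n, a ij.1 * ((ij.2 + 1 : ℕ) * logCoeff a (ij.2 + 1))
      = (n + 1 : ℕ) * a (n + 1) := by
  simpa [Nat.sum_antidiagonal_succ'] using sum_antidiagonal_mul_logCoeff ha0 (n + 1)

end LogCoeff

theorem eq_of_sum_antidiagonal_mul_eq {R : Type*} [CommRing R] [IsDomain R] {a x y : ℕ → R}
    (ha : a 0 ≠ 0)
    (h : ∀ n, ∑ ij ∈ antidiagonal n, a ij.1 * x ij.2 = ∑ ij ∈ antidiagonal n, a ij.1 * y ij.2) :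
    x = y := by
  have hA : PowerSeries.mk a ≠ 0 := fun h0 => ha (by simpa using congrArg (PowerSeries.coeff 0) h0)
  have hmul : PowerSeries.mk a * PowerSeries.mk x = PowerSeries.mk a * PowerSeries.mk y := by
    ext n; simpa [PowerSeries.coeff_mul] using h n
  funext n
  simpa using congrArg (PowerSeries.coeff n) (mul_left_cancel₀ hA hmul)

theorem lucas_eq_fib_add_fib {R : Type*} [CommRing R] {L : ℕ → R} (hL1 : L 1 = 1) (hL2 : L 2 = 3)
    (hrec : ∀ n, L (n + 3) = L (n + 2) + L (n + 1)) (n : ℕ) :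
    L (n + 1) = Nat.fib n + Nat.fib (n + 2) := by
  induction n using Nat.twoStepInduction with
  | zero => simp [hL1]
  | one => norm_num [hL2, Nat.fib_add_two]
  | more n ih₀ ih₁ =>
    rw [hrec, ih₀, ih₁]
    simp only [Nat.fib_add_two, Nat.cast_add]
    ring

theorem sum_antidiagonal_fib_mul_fib_add_fib (n : ℕ) :
    ∑ ij ∈ antidiagonal n, Nat.fib (ij.1 + 1) * (Nat.fib ij.2 + Nat.fib (ij.2 + 2))
      = (n + 1) * Nat.fib (n + 2) := by
  induction n using Nat.twoStepInduction with
  | zero => simp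
  | one => rfl
  | more n ih₀ ih₁ =>
    rw [Nat.sum_antidiagonal_succ] at ih₁ ⊢
    rw [Nat.sum_antidiagonal_succ]
    dsimp only at ih₁ ⊢
    have hsplit :
        ∑ ij ∈ antidiagonal n, Nat.fib (ij.1 + 1 + 1 + 1) * (Nat.fib ij.2 + Nat.fib (ij.2 + 2))
          = ∑ ij ∈ antidiagonal n, Nat.fib (ij.1 + 1) * (Nat.fib ij.2 + Nat.fib (ij.2 + 2))
            + ∑ ij ∈ antidiagonal n,
              Nat.fib (ij.1 + 1 + 1) * (Nat.fib ij.2 + Nat.fib (ij.2 + 2)) := by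
      rw [← sum_add_distrib]
      exact sum_congr rfl fun ij _ => by rw [Nat.fib_add_two (n := ij.1 + 1), add_mul]
    rw [hsplit, ih₀]
    have h4 := Nat.fib_add_two (n := n + 2)
    simp only [zero_add, Nat.fib_one, one_mul, show Nat.fib 2 = 1 from rfl] at ih₁ ⊢
    linear_combination ih₁ + (n + 2) * h4.symm

theorem sum_antidiagonal_fib_mul_lucas {R : Type*} [CommRing R] {L : ℕ → R} (hL1 : L 1 = 1)
    (hL2 : L 2 = 3) (hrec : ∀ n, L (n + 3) = L (n + 2) + L (n + 1)) (n : ℕ) :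
    ∑ ij ∈ antidiagonal n, (Nat.fib (ij.1 + 1) : R) * L (ij.2 + 1) = (n + 1) * Nat.fib (n + 2) := by
  have h := congrArg (Nat.cast (R := R)) (sum_antidiagonal_fib_mul_fib_add_fib n)
  push_cast at h
  simpa only [lucas_eq_fib_add_fib hL1 hL2 hrec] using h

theorem stmt13 (L : ℕ → ℝ) (hL1 : L 1 = 1) (hL2 : L 2 = 3)
    (hLrec : ∀ n : ℕ, 3 ≤ n → L n = L (n - 1) + L (n - 2))
    (d : ℕ) (hd : 1 ≤ d) :
    (d : ℝ) * ∑ p : Nat.Partition d,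
        ((-1 : ℝ) ^ (p.parts.card - 1) * (Nat.factorial (p.parts.card - 1)) *
          ∏ i ∈ Finset.Icc 1 d, ((Nat.fib (i + 1) : ℝ)) ^ (p.parts.count i)) /
        ∏ i ∈ Finset.Icc 1 d, (Nat.factorial (p.parts.count i) : ℝ)
    = L d := by
  set a : ℕ → ℝ := fun i => Nat.fib (i + 1)
  have ha0 : a 0 = 1 := by simp [a]
  have hrec : ∀ n, L (n + 3) = L (n + 2) + L (n + 1) := fun n => by
    simpa using hLrec (n + 3) (by omega)
  have hlog : (fun j => ((j + 1 : ℕ) : ℝ) * logCoeff a (j + 1)) = fun j => L (j + 1) :=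
    eq_of_sum_antidiagonal_mul_eq (a := a) (ha0 ▸ one_ne_zero) fun n => by
      rw [sum_antidiagonal_mul_succ_mul_logCoeff ha0, sum_antidiagonal_fib_mul_lucas hL1 hL2 hrec]
      push_cast [a]
      ring
  obtain ⟨n, rfl⟩ := Nat.exists_eq_add_of_le' hd
  rw [← congrFun hlog n, logCoeff]
  simp only [logWeight_parts_eq_prod_Icc, a]
end
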